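/- Let G be a semi-Markovian causal graph with observed variables V and let W ⊆ C ⊆ V be such that W is ancestral in G[C], i.e., no vertex of C∖W is an ancestor in G[C] of any vertex of W. Then for every SEM M ∈ 𝕄(G) and every v ∈ dom(V): Q^M[W](v) = Σ_{c′ ∈ dom(C∖W)} Q^M[C](v′), where v′ agrees with v outside C∖W and equals c′ on C∖W. -/

import Mathlib

open scoped Classical

/-- A semi-Markovian causal graph: a DAG over a finite vertex set partitioned into
observed (`obs`) and unobserved (`unobs`) variables, where every unobserved variable
has no parents and exactly two (distinct, observed) children. -/
structure CausalGraph (ν : Type) [Fintype ν] [DecidableEq ν] where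
  obs : Finset ν
  unobs : Finset ν
  disj : Disjoint obs unobs
  E : ν → ν → Prop
  edge_mem : ∀ x y, E x y → x ∈ obs ∪ unobs ∧ y ∈ obs ∪ unobs
  acyclic : ∀ x, ¬ Relation.TransGen E x x
  unobs_no_parent : ∀ u ∈ unobs, ∀ w, ¬ E w u
  unobs_two_children : ∀ u ∈ unobs,
    ∃ a b, a ≠ b ∧ a ∈ obs ∧ b ∈ obs ∧ (∀ w, E u w ↔ w = a ∨ w = b)

namespace CausalGraph

variable {ν : Type} [Fintype ν] [DecidableEq ν]

def verts (G : CausalGraph ν) : Finset ν := G.obs ∪ G.unobs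

/-- A structural equation model over the causal graph `G`: finite nonempty domains
(encoded as finite sets of naturals), a pmf for each unobserved variable, and a
conditional pmf (given an assignment to the parents) for each observed variable. -/
structure SEM (G : CausalGraph ν) where
  dom : ν → Finset ℕ
  dom_ne : ∀ x, (dom x).Nonempty
  pU : ν → ℕ → ℝ
  pU_nonneg : ∀ u n, 0 ≤ pU u n
  pU_sum : ∀ u ∈ G.unobs, ∑ n ∈ dom u, pU u n = 1
  pO : ν → ℕ → (ν → ℕ) → ℝ
  pO_nonneg : ∀ x n pa, 0 ≤ pO x n pa
  pO_sum : ∀ x ∈ G.obs, ∀ pa : ν → ℕ, ∑ n ∈ dom x, pO x n pa = 1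
  pO_par : ∀ x n (pa pa' : ν → ℕ), (∀ p, G.E p x → pa p = pa' p) → pO x n pa = pO x n pa'

namespace SEM

variable {G : CausalGraph ν}

/-- Full assignments: all variables of `G` get values in their domains
(non-vertices are pinned to `0`). -/
noncomputable def fullAssign (M : SEM G) : Finset (ν → ℕ) :=
  Fintype.piFinset (fun x => if x ∈ G.verts then M.dom x else {0})

/-- Observed assignments `dom(V)`: observed variables get values in their domains
(all other coordinates are pinned to `0`). -/
noncomputable def obsAssign (M : SEM G) : Finset (ν → ℕ) :=
  Fintype.piFinset (fun x => if x ∈ G.obs then M.dom x else {0})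

/-- `Q^M[S](v) = Σ_u Π_{X ∈ S} P(x | pa_G(X)) Π_{U} P(u)`. -/
noncomputable def Q (M : SEM G) (S : Finset ν) (v : ν → ℕ) : ℝ :=
  ∑ w ∈ M.fullAssign.filter (fun w => ∀ x ∈ G.obs, w x = v x),
    (∏ x ∈ S, M.pO x (w x) w) * ∏ u ∈ G.unobs, M.pU u (w u)

/-- The observational distribution `P^M(v) = Q^M[V](v)`. -/
noncomputable def P (M : SEM G) (v : ν → ℕ) : ℝ := M.Q G.obs v

/-- Post-interventional probability `P^M_x(y)`: sum of `Q^M[V∖X]` over all observed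
realizations consistent with `x` on `X` and `y` on `Y`. -/
noncomputable def Px (M : SEM G) (X : Finset ν) (x : ν → ℕ) (Y : Finset ν) (y : ν → ℕ) : ℝ :=
  ∑ v ∈ M.obsAssign.filter (fun v => (∀ i ∈ X, v i = x i) ∧ (∀ i ∈ Y, v i = y i)),
    M.Q (G.obs \ X) v

/-- `M ∈ 𝕄⁺(G)`: strictly positive observational distribution. -/
def positive (M : SEM G) : Prop := ∀ v ∈ M.obsAssign, 0 < M.P v

end SEM

/-- The causal effect of `X` on `Y` is identifiable from `G`. -/
def Identifiable (G : CausalGraph ν) (X Y : Finset ν) : Prop :=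
  ∀ M₁ M₂ : SEM G, M₁.positive → M₂.positive →
    (∀ i ∈ G.obs, M₁.dom i = M₂.dom i) →
    (∀ v ∈ M₁.obsAssign, M₁.P v = M₂.P v) →
    ∀ x y : ν → ℕ, (∀ i ∈ X, x i ∈ M₁.dom i) → (∀ i ∈ Y, y i ∈ M₁.dom i) →
      M₁.Px X x Y y = M₂.Px X x Y y

/-- `Q[S]` is identifiable from `G`. -/
def QIdentifiable (G : CausalGraph ν) (S : Finset ν) : Prop :=
  Identifiable G (G.obs \ S) S

/-- The causal effect of `X` on `Y` is g-identifiable from `(𝔸, G)`. -/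
def GIdentifiable (G : CausalGraph ν) (𝔸 : Finset (Finset ν)) (X Y : Finset ν) : Prop :=
  ∀ M₁ M₂ : SEM G, M₁.positive → M₂.positive →
    (∀ i ∈ G.obs, M₁.dom i = M₂.dom i) →
    (∀ A ∈ 𝔸, ∀ v ∈ M₁.obsAssign, M₁.Q A v = M₂.Q A v) →
    ∀ x y : ν → ℕ, (∀ i ∈ X, x i ∈ M₁.dom i) → (∀ i ∈ Y, y i ∈ M₁.dom i) →
      M₁.Px X x Y y = M₂.Px X x Y y

/-- `Q[S]` is g-identifiable from `(𝔸, G)`. -/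
def QGIdentifiable (G : CausalGraph ν) (𝔸 : Finset (Finset ν)) (S : Finset ν) : Prop :=
  GIdentifiable G 𝔸 (G.obs \ S) S

/-- Bidirected edge of `G_X` between `a` and `b`: distinct members of `X` sharing an
unobserved parent (whose two children then necessarily both lie in `X`). -/
def biEdge (G : CausalGraph ν) (X : Finset ν) (a b : ν) : Prop :=
  a ≠ b ∧ a ∈ X ∧ b ∈ X ∧ ∃ u ∈ G.unobs, G.E u a ∧ G.E u b

/-- `X` is a single c-component of `G`. -/
def SingleC (G : CausalGraph ν) (X : Finset ν) : Prop :=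
  X.Nonempty ∧ ∀ a ∈ X, ∀ b ∈ X, Relation.ReflTransGen (G.biEdge X) a b

/-- The c-components of `S`: connected components of the bidirected part of `G_S`. -/
noncomputable def cComponents (G : CausalGraph ν) (S : Finset ν) : Finset (Finset ν) :=
  S.image (fun a => S.filter (fun b => Relation.ReflTransGen (G.biEdge S) a b))

/-- Directed edge of `G_X` (both endpoints in `X`). -/
def dirEdgeIn (G : CausalGraph ν) (X : Finset ν) (a b : ν) : Prop :=
  a ∈ X ∧ b ∈ X ∧ G.E a b

/-- `Anc_Y(G_X)`: members of `X` having a directed path in `G_X` to some member of `Y`. -/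
noncomputable def ancIn (G : CausalGraph ν) (X Y : Finset ν) : Finset ν :=
  X.filter (fun a => ∃ y ∈ Y, Relation.ReflTransGen (G.dirEdgeIn X) a y)

/-- Unobserved vertices of the induced subgraph `G[A]`: unobserved vertices of `G`
both of whose children lie in `A`. -/
noncomputable def inducedUnobs (G : CausalGraph ν) (A : Finset ν) : Finset ν :=
  G.unobs.filter (fun u => ∀ w, G.E u w → w ∈ A)

/-- The induced subgraph `G[A]`. -/
noncomputable def induced (G : CausalGraph ν) (A : Finset ν) : CausalGraph ν where
  obs := A ∩ G.obs
  unobs := G.inducedUnobs A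
  disj := G.disj.mono Finset.inter_subset_right (Finset.filter_subset _ _)
  E x y := G.E x y ∧ x ∈ (A ∩ G.obs) ∪ G.inducedUnobs A ∧ y ∈ (A ∩ G.obs) ∪ G.inducedUnobs A
  edge_mem := fun x y h => ⟨h.2.1, h.2.2⟩
  acyclic := fun x h => G.acyclic x (by
    have key : ∀ a b, Relation.TransGen (fun x y => G.E x y ∧ x ∈ (A ∩ G.obs) ∪ G.inducedUnobs A ∧
        y ∈ (A ∩ G.obs) ∪ G.inducedUnobs A) a b → Relation.TransGen G.E a b := by
      intro a b hab'
      induction hab' with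
      | single hab => exact Relation.TransGen.single hab.1
      | tail _ hab ih => exact Relation.TransGen.tail ih hab.1
    exact key x x h)
  unobs_no_parent := fun u hu w hw =>
    G.unobs_no_parent u (Finset.mem_filter.mp hu).1 w hw.1
  unobs_two_children := by
    intro u hu
    have hu' := Finset.mem_filter.mp hu
    obtain ⟨a, b, hab, ha, hb, hiff⟩ := G.unobs_two_children u hu'.1
    have hEa : G.E u a := (hiff a).mpr (Or.inl rfl)
    have hEb : G.E u b := (hiff b).mpr (Or.inr rfl)
    have haA : a ∈ A := hu'.2 a hEa
    have hbA : b ∈ A := hu'.2 b hEb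
    refine ⟨a, b, hab, Finset.mem_inter.mpr ⟨haA, ha⟩, Finset.mem_inter.mpr ⟨hbA, hb⟩, ?_⟩
    intro w
    constructor
    · intro hw; exact (hiff w).mp hw.1
    · rintro (rfl | rfl)
      · exact ⟨hEa, Finset.mem_union.mpr (Or.inr hu),
          Finset.mem_union.mpr (Or.inl (Finset.mem_inter.mpr ⟨haA, ha⟩))⟩
      · exact ⟨hEb, Finset.mem_union.mpr (Or.inr hu),
          Finset.mem_union.mpr (Or.inl (Finset.mem_inter.mpr ⟨hbA, hb⟩))⟩

/-- `H` is a subgraph of `G`. -/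
def IsSubgraph (H G : CausalGraph ν) : Prop :=
  H.obs ⊆ G.obs ∧ H.unobs ⊆ G.unobs ∧ ∀ a b, H.E a b → G.E a b

/-- `H` is an `R`-rooted c-forest: `R` is the root set of `H`, the observed vertex set of
`H` is a single c-component, and every observed vertex has at most one child in `H`. -/
def IsCForest (H : CausalGraph ν) (R : Finset ν) : Prop :=
  H.obs.filter (fun x => ∀ w, ¬ H.E x w) = R ∧
  H.SingleC H.obs ∧
  ∀ x ∈ H.obs, ∀ w w', H.E x w → H.E x w' → w = w'

end CausalGraph

/-! Sum out the variables of `C \ W` one at a time, always choosing one that has no child among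
the variables still in the product; ancestrality of `W` in `G[C]` and acyclicity make such a
choice possible. The conditional probability of the chosen variable is then the only factor
depending on its value, so it sums to one. -/

section Extensions

variable {ν α : Type*} [Fintype ν] [DecidableEq ν]

def extensions (t : ν → Finset α) (A : Finset ν) (v : ν → α) : Finset (ν → α) :=
  Fintype.piFinset fun x => if x ∈ A then t x else {v x}

theorem mem_extensions {t : ν → Finset α} {A : Finset ν} {v w : ν → α} :
    w ∈ extensions t A v ↔ (∀ x ∈ A, w x ∈ t x) ∧ ∀ x ∉ A, w x = v x := by
  simp only [extensions, Fintype.mem_piFinset]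
  refine ⟨fun h => ⟨fun x hx => ?_, fun x hx => ?_⟩, fun h x => ?_⟩
  · simpa [hx] using h x
  · simpa [hx] using h x
  · by_cases hx : x ∈ A
    · simpa [hx] using h.1 x hx
    · simpa [hx] using h.2 x hx

variable {β : Type*} [AddCommMonoid β]

theorem sum_extensions_union {t : ν → Finset α} {A B : Finset ν} (hAB : Disjoint A B)
    (v : ν → α) (f : (ν → α) → β) :
    ∑ w ∈ extensions t (A ∪ B) v, f w =
      ∑ a ∈ extensions t A v, ∑ w ∈ extensions t B a, f w := by
  have hmaps : ∀ w ∈ extensions t (A ∪ B) v,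
      (fun x => if x ∈ B then v x else w x) ∈ extensions t A v := by
    intro w hw
    rw [mem_extensions] at hw ⊢
    refine ⟨fun x hx => ?_, fun x hx => ?_⟩
    · simpa [Finset.disjoint_left.mp hAB hx] using hw.1 x (Finset.mem_union_left B hx)
    · by_cases hxB : x ∈ B
      · simp [hxB]
      · simpa [hxB] using hw.2 x (by simp [hx, hxB])
  rw [← Finset.sum_fiberwise_of_maps_to hmaps]
  refine Finset.sum_congr rfl fun a ha =>
    Finset.sum_congr (Finset.ext fun w => ?_) fun _ _ => rfl
  rw [mem_extensions] at ha
  simp only [Finset.mem_filter, mem_extensions, funext_iff]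
  constructor
  · rintro ⟨⟨hw, -⟩, hwa⟩
    refine ⟨fun x hx => hw x (Finset.mem_union_right A hx), fun x hx => ?_⟩
    simpa [hx] using hwa x
  · rintro ⟨hw, hwa⟩
    refine ⟨⟨fun x hx => ?_, fun x hx => ?_⟩, fun x => ?_⟩
    · by_cases hxB : x ∈ B
      · exact hw x hxB
      · rw [hwa x hxB]
        exact ha.1 x ((Finset.mem_union.mp hx).resolve_right hxB)
    · simp only [Finset.mem_union, not_or] at hx
      rw [hwa x hx.2, ha.2 x hx.1]
    · by_cases hxB : x ∈ B
      · simpa [hxB] using (ha.2 x (Finset.disjoint_right.mp hAB hxB)).symm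
      · simp [hxB, hwa x hxB]

theorem sum_extensions_singleton (t : ν → Finset α) (c : ν) (a : ν → α)
    (f : (ν → α) → β) :
    ∑ w ∈ extensions t {c} a, f w = ∑ n ∈ t c, f (Function.update a c n) := by
  have hmap : extensions t {c} a =
      (t c).map ⟨Function.update a c, Function.update_injective a c⟩ := by
    ext w
    simp only [mem_extensions, Finset.mem_singleton, forall_eq, Finset.mem_map,
      Function.Embedding.coeFn_mk]
    constructor
    · rintro ⟨hc, hw⟩
      exact ⟨w c, hc, funext fun x => by
        rcases eq_or_ne x c with rfl | hx
        · simp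
        · simp [hx, hw x hx]⟩
    · rintro ⟨n, hn, rfl⟩
      exact ⟨by simpa using hn, fun x hx => Function.update_of_ne hx _ _⟩
  rw [hmap, Finset.sum_map]
  rfl

theorem sum_extensions_insert {t : ν → Finset α} {c : ν} {A : Finset ν} (hc : c ∉ A)
    (v : ν → α) (f : (ν → α) → β) :
    ∑ w ∈ extensions t (insert c A) v, f w =
      ∑ a ∈ extensions t A v, ∑ n ∈ t c, f (Function.update a c n) := by
  rw [Finset.insert_eq, Finset.union_comm,
    sum_extensions_union (Finset.disjoint_singleton_right.mpr hc)]
  simp only [sum_extensions_singleton]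

theorem sum_extensions_piecewise (t : ν → Finset α) (A : Finset ν) (u v : ν → α)
    (f : (ν → α) → β) :
    ∑ c ∈ extensions t A u, f (fun x => if x ∈ A then c x else v x) =
      ∑ a ∈ extensions t A v, f a := by
  have hmem : ∀ {u' v' c : ν → α}, c ∈ extensions t A u' →
      (fun x => if x ∈ A then c x else v' x) ∈ extensions t A v' := by
    intro u' v' c hc
    rw [mem_extensions] at hc ⊢
    exact ⟨fun x hx => by simpa [hx] using hc.1 x hx, fun x hx => by simp [hx]⟩
  have hinv : ∀ {u' v' c : ν → α}, c ∈ extensions t A u' →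
      (fun x => if x ∈ A then (if x ∈ A then c x else v' x) else u' x) = c := by
    intro u' v' c hc
    rw [mem_extensions] at hc
    exact funext fun x => by by_cases hx : x ∈ A <;> simp [hx, hc.2 x]
  exact Finset.sum_nbij' (fun c x => if x ∈ A then c x else v x)
    (fun a x => if x ∈ A then a x else u x) (fun _ => hmem) (fun _ => hmem)
    (fun _ => hinv) (fun _ => hinv) fun _ _ => rfl

end Extensions

theorem Finset.exists_forall_not_rel_of_acyclic {ν : Type*} [Finite ν] {E : ν → ν → Prop}
    (hE : ∀ x, ¬ Relation.TransGen E x x) {D : Finset ν} (hD : D.Nonempty) :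
    ∃ c ∈ D, ∀ d ∈ D, ¬ E c d := by
  have : IsStrictOrder ν (flip (Relation.TransGen E)) :=
    { irrefl := hE, trans := fun _ _ _ h₁ h₂ => h₂.trans h₁ }
  obtain ⟨c, hc, hmin⟩ :=
    (Finite.wellFounded_of_trans_of_irrefl (flip (Relation.TransGen E))).has_min (D : Set ν) hD
  exact ⟨c, hc, fun d hd hE => hmin d hd (Relation.TransGen.single hE)⟩

namespace CausalGraph

variable {ν : Type} [Fintype ν] [DecidableEq ν] {G : CausalGraph ν}

theorem not_edge_self (G : CausalGraph ν) (x : ν) : ¬ G.E x x :=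
  fun h => G.acyclic x (Relation.TransGen.single h)

namespace SEM

variable (M : SEM G)

noncomputable def weight (S : Finset ν) (w : ν → ℕ) : ℝ :=
  (∏ x ∈ S, M.pO x (w x) w) * ∏ u ∈ G.unobs, M.pU u (w u)

theorem obsAssign_eq_extensions : M.obsAssign = extensions M.dom G.obs 0 := rfl

theorem fullAssign_eq_extensions : M.fullAssign = extensions M.dom G.verts 0 := rfl

theorem extensions_subset_obsAssign {A : Finset ν} (hA : A ⊆ G.obs) {v : ν → ℕ}
    (hv : v ∈ M.obsAssign) : extensions M.dom A v ⊆ M.obsAssign := by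
  intro w hw
  rw [obsAssign_eq_extensions, mem_extensions] at hv ⊢
  rw [mem_extensions] at hw
  refine ⟨fun x hx => ?_, fun x hx => ?_⟩
  · by_cases hxA : x ∈ A
    · exact hw.1 x hxA
    · rw [hw.2 x hxA]
      exact hv.1 x hx
  · rw [hw.2 x fun h => hx (hA h), hv.2 x hx]

theorem Q_eq_sum_extensions (S : Finset ν) {v : ν → ℕ} (hv : v ∈ M.obsAssign) :
    M.Q S v = ∑ w ∈ extensions M.dom G.unobs v, M.weight S w := by
  rw [obsAssign_eq_extensions, mem_extensions] at hv
  refine Finset.sum_congr (Finset.ext fun w => ?_) fun _ _ => rfl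
  simp only [fullAssign_eq_extensions, Finset.mem_filter, mem_extensions, verts,
    Finset.mem_union, not_or]
  constructor
  · rintro ⟨⟨hdom, hzero⟩, hobs⟩
    refine ⟨fun x hx => hdom x (Or.inr hx), fun x hx => ?_⟩
    by_cases ho : x ∈ G.obs
    · exact hobs x ho
    · rw [hzero x ⟨ho, hx⟩, hv.2 x ho]
  · rintro ⟨hdom, hv'⟩
    have hobs : ∀ x ∈ G.obs, w x = v x :=
      fun x hx => hv' x (Finset.disjoint_left.mp G.disj hx)
    refine ⟨⟨fun x hx => ?_, fun x hx => ?_⟩, hobs⟩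
    · rcases hx with ho | hu
      · rw [hobs x ho]
        exact hv.1 x ho
      · exact hdom x hu
    · rw [hv' x hx.2, hv.2 x hx.1]

theorem pO_update_of_not_edge {c x : ν} (h : ¬ G.E c x) (m n : ℕ) (a : ν → ℕ) :
    M.pO x m (Function.update a c n) = M.pO x m a :=
  M.pO_par x m _ a fun p hp => Function.update_of_ne (by rintro rfl; exact h hp) _ _

theorem weight_insert_update {c : ν} {S : Finset ν} (hc : c ∈ G.obs) (hcS : c ∉ S)
    (hno : ∀ s ∈ S, ¬ G.E c s) (a : ν → ℕ) (n : ℕ) :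
    M.weight (insert c S) (Function.update a c n) = M.pO c n a * M.weight S a := by
  have hobs : ∏ x ∈ S, M.pO x (Function.update a c n x) (Function.update a c n) =
      ∏ x ∈ S, M.pO x (a x) a := by
    refine Finset.prod_congr rfl fun x hx => ?_
    rw [Function.update_of_ne (by rintro rfl; exact hcS hx), M.pO_update_of_not_edge (hno x hx)]
  have hunobs :
      ∏ u ∈ G.unobs, M.pU u (Function.update a c n u) = ∏ u ∈ G.unobs, M.pU u (a u) :=
    Finset.prod_congr rfl fun u hu => by
      rw [Function.update_of_ne (by rintro rfl; exact Finset.disjoint_left.mp G.disj hc hu)]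
  rw [weight, weight, Finset.prod_insert hcS, Function.update_self,
    M.pO_update_of_not_edge (G.not_edge_self c), hobs, hunobs, mul_assoc]

theorem sum_weight_insert_update {c : ν} {S : Finset ν} (hc : c ∈ G.obs) (hcS : c ∉ S)
    (hno : ∀ s ∈ S, ¬ G.E c s) (a : ν → ℕ) :
    ∑ n ∈ M.dom c, M.weight (insert c S) (Function.update a c n) = M.weight S a := by
  simp only [M.weight_insert_update hc hcS hno, ← Finset.sum_mul, M.pO_sum c hc, one_mul]

theorem sum_extensions_weight_union {S D : Finset ν} (hD : D ⊆ G.obs) (hSD : Disjoint S D)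
    (hno : ∀ d ∈ D, ∀ s ∈ S, ¬ G.E d s) (v : ν → ℕ) :
    ∑ w ∈ extensions M.dom (D ∪ G.unobs) v, M.weight (S ∪ D) w =
      ∑ w ∈ extensions M.dom G.unobs v, M.weight S w := by
  induction D using Finset.strongInduction with
  | H D ih =>
    rcases D.eq_empty_or_nonempty with rfl | hne
    · simp
    obtain ⟨c, hcD, hsink⟩ := Finset.exists_forall_not_rel_of_acyclic G.acyclic hne
    have hc : c ∈ G.obs := hD hcD
    have hcS : c ∉ S := Finset.disjoint_right.mp hSD hcD
    have hD' : D.erase c ⊆ G.obs := (D.erase_subset c).trans hD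
    rw [← Finset.insert_erase hcD, Finset.insert_union, Finset.union_insert,
      sum_extensions_insert (by simp [Finset.disjoint_left.mp G.disj hc])]
    have hcS' : c ∉ S ∪ D.erase c := by simp [hcS]
    have hno' : ∀ s ∈ S ∪ D.erase c, ¬ G.E c s := by
      simpa [or_imp, forall_and] using ⟨hno c hcD, fun d _ hd => hsink d hd⟩
    simp only [M.sum_weight_insert_update hc hcS' hno']
    exact ih _ (D.erase_ssubset hcD) hD' (hSD.mono_right (D.erase_subset c))
      fun d hd => hno d (D.mem_of_mem_erase hd)

end SEM

end CausalGraph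

/-- Lemma 7, Tian–Pearl. If `W ⊆ C ⊆ V` and `W` is ancestral in
`G[C]`, then `Q[W]` is obtained from `Q[C]` by marginalizing over `C ∖ W`. -/
theorem Q_marginalize_ancestral
    {ν : Type} [Fintype ν] [DecidableEq ν] (G : CausalGraph ν)
    (W C : Finset ν) (hWC : W ⊆ C) (hCV : C ⊆ G.obs)
    (hanc : ∀ c ∈ C \ W, ∀ w ∈ W, ¬ Relation.ReflTransGen (G.dirEdgeIn C) c w)
    (M : CausalGraph.SEM G) (v : ν → ℕ) (hv : v ∈ M.obsAssign) :
    M.Q W v =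
      ∑ c' ∈ Fintype.piFinset (fun x => if x ∈ C \ W then M.dom x else ({0} : Finset ℕ)),
        M.Q C (fun x => if x ∈ C \ W then c' x else v x) := by
  have hCW : C \ W ⊆ G.obs := Finset.sdiff_subset.trans hCV
  have hno : ∀ d ∈ C \ W, ∀ w ∈ W, ¬ G.E d w := fun d hd w hw hE =>
    hanc d hd w hw (Relation.ReflTransGen.single ⟨(Finset.mem_sdiff.mp hd).1, hWC hw, hE⟩)
  calc M.Q W v
      = ∑ w ∈ extensions M.dom (C \ W ∪ G.unobs) v, M.weight (W ∪ C \ W) w := by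
        rw [M.Q_eq_sum_extensions W hv,
          M.sum_extensions_weight_union hCW Finset.disjoint_sdiff hno]
    _ = ∑ a ∈ extensions M.dom (C \ W) v, M.Q C a := by
        rw [Finset.union_sdiff_of_subset hWC, sum_extensions_union (G.disj.mono_left hCW)]
        exact Finset.sum_congr rfl fun a ha =>
          (M.Q_eq_sum_extensions C (M.extensions_subset_obsAssign hCW hv ha)).symm
    _ = _ := (sum_extensions_piecewise M.dom (C \ W) 0 v (M.Q C)).symm
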